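/- Let d ≥ 1 and let f, g : ℝ^d → ℝ be Lipschitz functions of at most polynomial growth (so that all integrals below converge absolutely). Then ∫_{ℝ^d} f(v) (ℒg)(v) M(v) dv = (1/4) ∫_{ℝ^d×ℝ^d×𝕊^{d−1}} M(v) M(v*) ((v−v*)·ω)_+ Δf(v,v*,ω) Δg(v,v*,ω) dv dv* dω. In particular, ∫ f (ℒg) M dv = ∫ g (ℒf) M dv (symmetry of ℒ in L²(M dv)) and ∫ g (ℒg) M dv ≥ 0 (nonnegativity of ℒ). -/

import Mathlib

open MeasureTheory Real Filter Topology
open scoped RealInnerProductSpace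

noncomputable section

abbrev Rd (d : ℕ) := EuclideanSpace ℝ (Fin d)

/-- The unit sphere `𝕊^{d-1} ⊂ ℝ^d`. -/
abbrev Sph (d : ℕ) := Metric.sphere (0 : Rd d) 1

/-- The Maxwellian density on `ℝ^d`. -/
def Maxw (d : ℕ) (v : Rd d) : ℝ := (2 * π) ^ (-(d : ℝ) / 2) * Real.exp (-‖v‖ ^ 2 / 2)

/-- The scattered velocity `v' = v - ((v - v*)·ω) ω`. -/
def vOut (d : ℕ) (v vs : Rd d) (ω : Sph d) : Rd d :=
  v - ⟪v - vs, (ω : Rd d)⟫ • (ω : Rd d)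

/-- The scattered velocity `v*' = v* + ((v - v*)·ω) ω`. -/
def vsOut (d : ℕ) (v vs : Rd d) (ω : Sph d) : Rd d :=
  vs + ⟪v - vs, (ω : Rd d)⟫ • (ω : Rd d)

/-- `Δh(v, v*, ω) = h(v') + h(v*') - h(v) - h(v*)`. -/
def collDiff (d : ℕ) (h : Rd d → ℝ) (v vs : Rd d) (ω : Sph d) : ℝ :=
  h (vOut d v vs ω) + h (vsOut d v vs ω) - h v - h vs

/-- The uniform (rotation invariant) measure on the unit sphere, obtained from the
Lebesgue measure by the polar decomposition. -/
def sphMeasure (d : ℕ) : Measure (Sph d) := (volume : Measure (Rd d)).toSphere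

/-- The hard-sphere linearized Boltzmann collision operator
`(ℒg)(v) = ∫ M(v*) ((v-v*)·ω)₊ [g(v) + g(v*) - g(v') - g(v*')] dv* dω`. -/
def linL (d : ℕ) (g : Rd d → ℝ) (v : Rd d) : ℝ :=
  ∫ p : Rd d × Sph d,
    Maxw d p.1 * max ⟪v - p.1, (p.2 : Rd d)⟫ 0 * (-collDiff d g v p.1 p.2)
    ∂((volume : Measure (Rd d)).prod (sphMeasure d))

end

/-! By Fubini, `∫ f (ℒg) M = -∫ M M* B f(v) Δg` with `B = ((v - v*)·ω)₊`. The measure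
`dv dv* dω` and the weight `M M* B` are invariant under the exchange `(v, v*, ω) ↦ (v*, v, -ω)`
and under the collision `(v, v*, ω) ↦ (v', v*', -ω)`: for fixed `ω` the collision is a linear
involution, and energy conservation gives `M(v') M(v*') = M(v) M(v*)`. Since `Δg` is invariant
under the exchange and changes sign under the collision, each of the four terms of
`Δf = f(v') + f(v*') - f(v) - f(v*)` contributes exactly `∫ f (ℒg) M`, whence the factor `1/4`.
Polynomial growth against the Gaussian weight makes all these integrals absolutely convergent. -/

open Function

theorem MeasureTheory.MeasurePreserving.integral_comp_involutive {α E : Type*}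
    [MeasurableSpace α] [NormedAddCommGroup E] [NormedSpace ℝ E] {μ : Measure α}
    {T : α → α} (hT : MeasurePreserving T μ μ) (hinv : Involutive T) (F : α → E) :
    ∫ x, F (T x) ∂μ = ∫ x, F x ∂μ :=
  hT.integral_comp (MeasurableEquiv.ofInvolutive T hinv hT.measurable).measurableEmbedding F

theorem MeasureTheory.measurePreserving_prod_fiberwise {α β : Type*} [MeasurableSpace α]
    [MeasurableSpace β] {μ : Measure α} {ν : Measure β} [SFinite μ] [SFinite ν]
    {T : β → α → α} (hT : Measurable (uncurry T))
    (hTμ : ∀ b, MeasurePreserving (T b) μ μ) :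
    MeasurePreserving (fun p : α × β => (T p.2 p.1, p.2)) (μ.prod ν) (μ.prod ν) :=
  (Measure.measurePreserving_swap.comp ((MeasurePreserving.id ν).skew_product hT
    (ae_of_all _ fun b => (hTμ b).map_eq))).comp Measure.measurePreserving_swap

theorem LinearMap.measurePreserving_of_comp_self {E : Type*} [NormedAddCommGroup E]
    [NormedSpace ℝ E] [FiniteDimensional ℝ E] [MeasurableSpace E] [BorelSpace E]
    (μ : Measure E) [μ.IsAddHaarMeasure] {L : E →ₗ[ℝ] E} (hL : L ∘ₗ L = LinearMap.id) :
    MeasurePreserving L μ μ := by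
  have hdet : LinearMap.det L * LinearMap.det L = 1 := by
    rw [← LinearMap.det_comp, hL, LinearMap.det_id]
  have hdet_ne : LinearMap.det L ≠ 0 := left_ne_zero_of_mul_eq_one hdet
  refine ⟨L.continuous_of_finiteDimensional.measurable, ?_⟩
  rw [Measure.map_linearMap_addHaar_eq_smul_addHaar μ hdet_ne, abs_inv]
  rcases mul_self_eq_one_iff.mp hdet with h | h <;> simp [h]

theorem MeasureTheory.Measure.measurePreserving_neg_toSphere {E : Type*} [NormedAddCommGroup E]
    [NormedSpace ℝ E] [MeasurableSpace E] [BorelSpace E] (μ : Measure E) [μ.IsNegInvariant] :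
    MeasurePreserving (fun ω : Metric.sphere (0 : E) 1 => -ω) μ.toSphere μ.toSphere := by
  refine ⟨continuous_neg.measurable, Measure.ext fun s hs => ?_⟩
  have hneg : MeasurableSet ((fun ω : Metric.sphere (0 : E) 1 => -ω) ⁻¹' s) :=
    continuous_neg.measurable hs
  rw [Measure.map_apply continuous_neg.measurable hs, Measure.toSphere_apply' _ hneg,
    Measure.toSphere_apply' _ hs]
  have himage : ((↑) '' ((fun ω : Metric.sphere (0 : E) 1 => -ω) ⁻¹' s) : Set E) =
      -((↑) '' s) := by
    ext x
    constructor
    · rintro ⟨ω, hω, rfl⟩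
      exact ⟨-ω, hω, by simp⟩
    · rintro ⟨ω, hω, hωx⟩
      exact ⟨-ω, by simpa using hω, by simp [hωx]⟩
  rw [himage, Set.smul_neg, Measure.measure_neg]

theorem integrable_exp_neg_mul_sq_norm {V : Type*} [NormedAddCommGroup V] [InnerProductSpace ℝ V]
    [FiniteDimensional ℝ V] [MeasurableSpace V] [BorelSpace V]
    {b : ℝ} (hb : 0 < b) : Integrable fun v : V => exp (-b * ‖v‖ ^ 2) := by
  refine (GaussianFourier.integrable_cexp_neg_mul_sq_norm_add (V := V) (b := b)
    (by simpa using hb) 0 0).norm.congr (ae_of_all _ fun v => ?_)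
  simp [Complex.norm_exp, ← Complex.ofReal_pow]

theorem one_add_pow_le_exp (N : ℕ) {t : ℝ} (ht : 0 ≤ t) :
    (1 + t) ^ N ≤ exp (N ^ 2 + t ^ 2 / 4) :=
  calc (1 + t) ^ N ≤ exp t ^ N :=
        pow_le_pow_left₀ (by linarith) (by linarith [add_one_le_exp t]) N
    _ = exp (N * t) := (exp_nat_mul t N).symm
    _ ≤ exp (N ^ 2 + t ^ 2 / 4) := exp_le_exp.mpr (by nlinarith [sq_nonneg (t / 2 - N)])

def HasPolyGrowth {E : Type*} [Norm E] (h : E → ℝ) : Prop :=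
  ∃ C > (0 : ℝ), ∃ k : ℕ, ∀ v, |h v| ≤ C * (1 + ‖v‖) ^ k

noncomputable section

abbrev CollSpace (d : ℕ) := (Rd d × Rd d) × Sph d

section

variable {d : ℕ}

theorem inner_vOut_sub_vsOut (v vs : Rd d) (ω : Sph d) :
    ⟪vOut d v vs ω - vsOut d v vs ω, (ω : Rd d)⟫ = -⟪v - vs, (ω : Rd d)⟫ := by
  have h : vOut d v vs ω - vsOut d v vs ω
      = (v - vs) - (2 * ⟪v - vs, (ω : Rd d)⟫) • (ω : Rd d) := by
    rw [vOut, vsOut]; module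
  rw [h, inner_sub_left, real_inner_smul_left,
    inner_self_eq_one_of_norm_eq_one (norm_eq_of_mem_sphere ω)]
  ring

@[simp]
theorem vOut_vOut_vsOut (v vs : Rd d) (ω : Sph d) :
    vOut d (vOut d v vs ω) (vsOut d v vs ω) ω = v := by
  conv_lhs => rw [vOut, inner_vOut_sub_vsOut, vOut]
  module

@[simp]
theorem vsOut_vOut_vsOut (v vs : Rd d) (ω : Sph d) :
    vsOut d (vOut d v vs ω) (vsOut d v vs ω) ω = vs := by
  conv_lhs => rw [vsOut, inner_vOut_sub_vsOut, vsOut]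
  module

theorem vOut_swap (v vs : Rd d) (ω : Sph d) : vOut d vs v ω = vsOut d v vs ω := by
  rw [vOut, vsOut, ← neg_sub v vs, inner_neg_left]
  module

theorem vsOut_swap (v vs : Rd d) (ω : Sph d) : vsOut d vs v ω = vOut d v vs ω := by
  rw [vOut, vsOut, ← neg_sub v vs, inner_neg_left]
  module

@[simp]
theorem vOut_neg (v vs : Rd d) (ω : Sph d) : vOut d v vs (-ω) = vOut d v vs ω := by
  rw [vOut, vOut, coe_neg_sphere, inner_neg_right, neg_smul_neg]

@[simp]
theorem vsOut_neg (v vs : Rd d) (ω : Sph d) : vsOut d v vs (-ω) = vsOut d v vs ω := by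
  rw [vsOut, vsOut, coe_neg_sphere, inner_neg_right, neg_smul_neg]

theorem norm_vOut_sq_add_norm_vsOut_sq (v vs : Rd d) (ω : Sph d) :
    ‖vOut d v vs ω‖ ^ 2 + ‖vsOut d v vs ω‖ ^ 2 = ‖v‖ ^ 2 + ‖vs‖ ^ 2 := by
  have hc : ⟪v - vs, (ω : Rd d)⟫ = ⟪v, (ω : Rd d)⟫ - ⟪vs, (ω : Rd d)⟫ :=
    inner_sub_left _ _ _
  have hω : ‖(ω : Rd d)‖ = 1 := norm_eq_of_mem_sphere ω
  rw [vOut, vsOut, norm_sub_sq_real, norm_add_sq_real, real_inner_smul_right,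
    real_inner_smul_right, norm_smul, hω, Real.norm_eq_abs, mul_one, sq_abs]
  linear_combination (2 * ⟪v - vs, (ω : Rd d)⟫) * hc

theorem norm_vOut_le (v vs : Rd d) (ω : Sph d) :
    ‖vOut d v vs ω‖ ≤ ‖v‖ + ‖vs‖ := by
  nlinarith [norm_vOut_sq_add_norm_vsOut_sq v vs ω, norm_nonneg (vOut d v vs ω),
    norm_nonneg v, norm_nonneg vs, sq_nonneg ‖vsOut d v vs ω‖]

theorem norm_vsOut_le (v vs : Rd d) (ω : Sph d) :
    ‖vsOut d v vs ω‖ ≤ ‖v‖ + ‖vs‖ := by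
  nlinarith [norm_vOut_sq_add_norm_vsOut_sq v vs ω, norm_nonneg (vsOut d v vs ω),
    norm_nonneg v, norm_nonneg vs, sq_nonneg ‖vOut d v vs ω‖]

theorem collDiff_swap (h : Rd d → ℝ) (v vs : Rd d) (ω : Sph d) :
    collDiff d h vs v ω = collDiff d h v vs ω := by
  rw [collDiff, collDiff, vOut_swap v vs, vsOut_swap v vs]
  ring

@[simp]
theorem collDiff_neg (h : Rd d → ℝ) (v vs : Rd d) (ω : Sph d) :
    collDiff d h v vs (-ω) = collDiff d h v vs ω := by
  rw [collDiff, collDiff, vOut_neg, vsOut_neg]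

theorem collDiff_vOut_vsOut (h : Rd d → ℝ) (v vs : Rd d) (ω : Sph d) :
    collDiff d h (vOut d v vs ω) (vsOut d v vs ω) ω = -collDiff d h v vs ω := by
  rw [collDiff, collDiff, vOut_vOut_vsOut, vsOut_vOut_vsOut]
  ring

theorem maxw_nonneg (v : Rd d) : 0 ≤ Maxw d v := by
  rw [Maxw]; positivity

theorem maxw_vOut_mul_maxw_vsOut (v vs : Rd d) (ω : Sph d) :
    Maxw d (vOut d v vs ω) * Maxw d (vsOut d v vs ω) = Maxw d v * Maxw d vs := by
  have henergy : -‖vOut d v vs ω‖ ^ 2 / 2 + -‖vsOut d v vs ω‖ ^ 2 / 2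
      = -‖v‖ ^ 2 / 2 + -‖vs‖ ^ 2 / 2 := by
    linarith [norm_vOut_sq_add_norm_vsOut_sq v vs ω]
  simp only [Maxw]
  rw [mul_mul_mul_comm, ← Real.exp_add, henergy, Real.exp_add]
  ring

def collisionMap (ω : Sph d) : (Rd d × Rd d) →ₗ[ℝ] Rd d × Rd d :=
  LinearMap.id - ((innerₗ (Rd d) (ω : Rd d)).comp
    (LinearMap.fst ℝ _ _ - LinearMap.snd ℝ _ _)).smulRight ((ω : Rd d), -(ω : Rd d))

theorem collisionMap_apply (ω : Sph d) (p : Rd d × Rd d) :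
    collisionMap ω p = (vOut d p.1 p.2 ω, vsOut d p.1 p.2 ω) := by
  refine Prod.ext ?_ ?_ <;> simp [collisionMap, vOut, vsOut, real_inner_comm]

theorem collisionMap_comp_self (ω : Sph d) :
    collisionMap ω ∘ₗ collisionMap ω = LinearMap.id :=
  LinearMap.ext fun p => by simp [collisionMap_apply]

theorem continuous_vOut : Continuous fun q : CollSpace d => vOut d q.1.1 q.1.2 q.2 := by
  unfold vOut; fun_prop

theorem continuous_vsOut : Continuous fun q : CollSpace d => vsOut d q.1.1 q.1.2 q.2 := by
  unfold vsOut; fun_prop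

instance : IsFiniteMeasure (sphMeasure d) := by unfold sphMeasure; infer_instance

abbrev collMeasure (d : ℕ) : Measure (CollSpace d) :=
  ((volume : Measure (Rd d)).prod volume).prod (sphMeasure d)

theorem measurePreserving_vOut_vsOut :
    MeasurePreserving (fun q : CollSpace d =>
      ((vOut d q.1.1 q.1.2 q.2, vsOut d q.1.1 q.1.2 q.2), q.2))
      (collMeasure d) (collMeasure d) := by
  refine measurePreserving_prod_fiberwise (μ := (volume : Measure (Rd d)).prod volume)
    (ν := sphMeasure d) (T := fun ω p => (vOut d p.1 p.2 ω, vsOut d p.1 p.2 ω)) ?_ fun ω => ?_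
  · exact (continuous_vOut.prodMk continuous_vsOut).measurable.comp measurable_swap
  · rw [← funext (collisionMap_apply ω)]
    exact LinearMap.measurePreserving_of_comp_self _ (collisionMap_comp_self ω)

def collWeight (q : CollSpace d) : ℝ :=
  Maxw d q.1.1 * Maxw d q.1.2 * max ⟪q.1.1 - q.1.2, (q.2 : Rd d)⟫ 0

-- In both maps `ω` is reversed so that `((v - v*)·ω)₊`, hence `collWeight`, is preserved.
def particleSwap (q : CollSpace d) : CollSpace d := ((q.1.2, q.1.1), -q.2)

def collisionInvolution (q : CollSpace d) : CollSpace d :=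
  ((vOut d q.1.1 q.1.2 q.2, vsOut d q.1.1 q.1.2 q.2), -q.2)

theorem particleSwap_involutive : Involutive (particleSwap (d := d)) := fun q => by
  simp [particleSwap]

theorem collisionInvolution_involutive : Involutive (collisionInvolution (d := d)) := fun q => by
  simp [collisionInvolution]

theorem measurePreserving_neg_sph :
    MeasurePreserving (fun ω : Sph d => -ω) (sphMeasure d) (sphMeasure d) :=
  Measure.measurePreserving_neg_toSphere _

theorem measurePreserving_particleSwap :
    MeasurePreserving particleSwap (collMeasure d) (collMeasure d) :=
  (Measure.measurePreserving_swap (μ := (volume : Measure (Rd d))) (ν := volume)).prod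
    measurePreserving_neg_sph

theorem measurePreserving_collisionInvolution :
    MeasurePreserving collisionInvolution (collMeasure d) (collMeasure d) :=
  ((MeasurePreserving.id _).prod measurePreserving_neg_sph).comp measurePreserving_vOut_vsOut

theorem collWeight_particleSwap (q : CollSpace d) :
    collWeight (particleSwap q) = collWeight q := by
  simp only [collWeight, particleSwap, coe_neg_sphere, inner_neg_right, ← inner_neg_left, neg_sub]
  ring

theorem collWeight_collisionInvolution (q : CollSpace d) :
    collWeight (collisionInvolution q) = collWeight q := by
  simp only [collWeight, collisionInvolution, coe_neg_sphere, inner_neg_right,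
    inner_vOut_sub_vsOut, neg_neg, maxw_vOut_mul_maxw_vsOut]

theorem integral_collWeight_mul_comp {T : CollSpace d → CollSpace d}
    (hT : MeasurePreserving T (collMeasure d) (collMeasure d)) (hinv : Involutive T)
    (hW : ∀ q, collWeight (T q) = collWeight q) (F : CollSpace d → ℝ) :
    ∫ q, collWeight q * F (T q) ∂collMeasure d
      = ∫ q, collWeight q * F q ∂collMeasure d := by
  simpa only [hW] using hT.integral_comp_involutive hinv fun q => collWeight q * F q

theorem continuous_maxw : Continuous (Maxw d) := by
  unfold Maxw; fun_prop

theorem integrable_maxw_mul_pow (N : ℕ) :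
    Integrable fun v : Rd d => Maxw d v * (1 + ‖v‖) ^ N := by
  refine ((integrable_exp_neg_mul_sq_norm (V := Rd d) (b := 1 / 4) (by norm_num)).const_mul
    ((2 * π) ^ (-(d : ℝ) / 2) * exp (N ^ 2))).mono'
    (continuous_maxw.mul (by fun_prop)).aestronglyMeasurable (ae_of_all _ fun v => ?_)
  rw [norm_of_nonneg (by have := maxw_nonneg v; positivity), Maxw]
  calc (2 * π) ^ (-(d : ℝ) / 2) * exp (-‖v‖ ^ 2 / 2) * (1 + ‖v‖) ^ N
      ≤ (2 * π) ^ (-(d : ℝ) / 2) * exp (-‖v‖ ^ 2 / 2) * exp (N ^ 2 + ‖v‖ ^ 2 / 4) := by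
        gcongr; exact one_add_pow_le_exp N (norm_nonneg v)
    _ = (2 * π) ^ (-(d : ℝ) / 2) * exp (N ^ 2) * exp (-(1 / 4) * ‖v‖ ^ 2) := by
        rw [mul_assoc, ← exp_add, mul_assoc, ← exp_add]; ring_nf

def polyWeight (q : CollSpace d) : ℝ := (1 + ‖q.1.1‖) * (1 + ‖q.1.2‖)

def IsPolyBounded (φ : CollSpace d → ℝ) : Prop :=
  ∃ C : ℝ, ∃ N : ℕ, ∀ q, |φ q| ≤ C * polyWeight q ^ N

theorem polyWeight_nonneg (q : CollSpace d) : 0 ≤ polyWeight q := by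
  unfold polyWeight; positivity

theorem one_add_norm_le_polyWeight {q : CollSpace d} {x : Rd d}
    (hx : ‖x‖ ≤ ‖q.1.1‖ + ‖q.1.2‖) : 1 + ‖x‖ ≤ polyWeight q := by
  unfold polyWeight
  nlinarith [mul_nonneg (norm_nonneg q.1.1) (norm_nonneg q.1.2)]

theorem HasPolyGrowth.exists_bound_polyWeight {h : Rd d → ℝ} (hh : HasPolyGrowth h) :
    ∃ C : ℝ, ∃ k : ℕ, ∀ (q : CollSpace d) (x : Rd d),
      ‖x‖ ≤ ‖q.1.1‖ + ‖q.1.2‖ → |h x| ≤ C * polyWeight q ^ k := by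
  obtain ⟨C, hC, k, hb⟩ := hh
  exact ⟨C, k, fun q x hx => (hb x).trans (by gcongr; exact one_add_norm_le_polyWeight hx)⟩

theorem HasPolyGrowth.isPolyBounded_comp {h : Rd d → ℝ} (hh : HasPolyGrowth h)
    {x : CollSpace d → Rd d} (hx : ∀ q, ‖x q‖ ≤ ‖q.1.1‖ + ‖q.1.2‖) :
    IsPolyBounded fun q => h (x q) := by
  obtain ⟨C, k, hb⟩ := hh.exists_bound_polyWeight
  exact ⟨C, k, fun q => hb q _ (hx q)⟩

theorem HasPolyGrowth.isPolyBounded_collDiff {h : Rd d → ℝ} (hh : HasPolyGrowth h) :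
    IsPolyBounded fun q => collDiff d h q.1.1 q.1.2 q.2 := by
  obtain ⟨C, k, hb⟩ := hh.exists_bound_polyWeight
  refine ⟨4 * C, k, fun q => ?_⟩
  have h₁ := hb q _ (norm_vOut_le q.1.1 q.1.2 q.2)
  have h₂ := hb q _ (norm_vsOut_le q.1.1 q.1.2 q.2)
  have h₃ := hb q q.1.1 (le_add_of_nonneg_right (norm_nonneg _))
  have h₄ := hb q q.1.2 (le_add_of_nonneg_left (norm_nonneg _))
  unfold collDiff
  refine abs_le.mpr ⟨?_, ?_⟩ <;>
    linarith [abs_le.mp h₁, abs_le.mp h₂, abs_le.mp h₃, abs_le.mp h₄]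

theorem IsPolyBounded.mul {φ ψ : CollSpace d → ℝ} (hφ : IsPolyBounded φ)
    (hψ : IsPolyBounded ψ) : IsPolyBounded fun q => φ q * ψ q := by
  obtain ⟨C, N, hφ⟩ := hφ
  obtain ⟨C', N', hψ⟩ := hψ
  refine ⟨C * C', N + N', fun q => ?_⟩
  rw [abs_mul, pow_add, mul_mul_mul_comm]
  exact mul_le_mul (hφ q) (hψ q) (abs_nonneg _) ((abs_nonneg _).trans (hφ q))

theorem max_inner_le_polyWeight (q : CollSpace d) :
    max ⟪q.1.1 - q.1.2, (q.2 : Rd d)⟫ 0 ≤ polyWeight q := by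
  refine max_le ?_ (polyWeight_nonneg q)
  calc ⟪q.1.1 - q.1.2, (q.2 : Rd d)⟫ ≤ ‖q.1.1 - q.1.2‖ * ‖(q.2 : Rd d)‖ :=
        real_inner_le_norm _ _
    _ ≤ 1 + ‖q.1.1 - q.1.2‖ := by rw [norm_eq_of_mem_sphere, mul_one]; linarith
    _ ≤ polyWeight q := one_add_norm_le_polyWeight (norm_sub_le _ _)

theorem collWeight_nonneg (q : CollSpace d) : 0 ≤ collWeight q := by
  unfold collWeight
  have := maxw_nonneg q.1.1
  have := maxw_nonneg q.1.2
  positivity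

theorem continuous_collWeight : Continuous (collWeight (d := d)) := by
  unfold collWeight
  have := continuous_maxw (d := d)
  fun_prop

theorem integrable_collWeight_mul {φ : CollSpace d → ℝ}
    (hφm : AEStronglyMeasurable φ (collMeasure d)) (hφ : IsPolyBounded φ) :
    Integrable (fun q => collWeight q * φ q) (collMeasure d) := by
  obtain ⟨C, N, hb⟩ := hφ
  have hdom := (((integrable_maxw_mul_pow (d := d) (N + 1)).mul_prod
    (integrable_maxw_mul_pow (d := d) (N + 1))).mul_prod (integrable_const (1 : ℝ)
      (μ := sphMeasure d))).const_mul C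
  refine hdom.mono' (continuous_collWeight.aestronglyMeasurable.mul hφm)
    (ae_of_all _ fun q => ?_)
  have hB := max_inner_le_polyWeight q
  have hMM := mul_nonneg (maxw_nonneg q.1.1) (maxw_nonneg q.1.2)
  rw [norm_mul, norm_of_nonneg (collWeight_nonneg q), Real.norm_eq_abs]
  calc collWeight q * |φ q|
      ≤ Maxw d q.1.1 * Maxw d q.1.2 * polyWeight q * (C * polyWeight q ^ N) :=
        mul_le_mul (mul_le_mul_of_nonneg_left hB hMM) (hb q) (abs_nonneg _)
          (mul_nonneg hMM (polyWeight_nonneg q))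
    _ = C * (Maxw d q.1.1 * (1 + ‖q.1.1‖) ^ (N + 1)
          * (Maxw d q.1.2 * (1 + ‖q.1.2‖) ^ (N + 1)) * 1) := by
        simp only [polyWeight, mul_pow, pow_succ]; ring

theorem integral_mul_linL_mul_maxw {f g : Rd d → ℝ}
    (hint : Integrable (fun q => collWeight q * (f q.1.1 * collDiff d g q.1.1 q.1.2 q.2))
      (collMeasure d)) :
    ∫ v, f v * linL d g v * Maxw d v
      = -∫ q, collWeight q * (f q.1.1 * collDiff d g q.1.1 q.1.2 q.2) ∂collMeasure d := by
  have he := measurePreserving_prodAssoc (volume : Measure (Rd d)) (volume : Measure (Rd d))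
    (sphMeasure d)
  have hemb :=
    (MeasurableEquiv.prodAssoc (α := Rd d) (β := Rd d) (γ := Sph d)).measurableEmbedding
  set G : Rd d × (Rd d × Sph d) → ℝ := fun z => f z.1 * Maxw d z.1 *
    (Maxw d z.2.1 * max ⟪z.1 - z.2.1, (z.2.2 : Rd d)⟫ 0 * (-collDiff d g z.1 z.2.1 z.2.2))
  have hGe : G ∘ MeasurableEquiv.prodAssoc =
      fun q => -(collWeight q * (f q.1.1 * collDiff d g q.1.1 q.1.2 q.2)) := by
    ext q
    simp only [G, collWeight, Function.comp_apply, MeasurableEquiv.prodAssoc,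
      MeasurableEquiv.coe_mk, Equiv.prodAssoc_apply]
    ring
  have hG : Integrable G (volume.prod ((volume : Measure (Rd d)).prod (sphMeasure d))) := by
    rw [← he.integrable_comp_emb hemb, hGe]; exact hint.neg
  calc ∫ v, f v * linL d g v * Maxw d v
      = ∫ v, ∫ p, G (v, p) ∂((volume : Measure (Rd d)).prod (sphMeasure d)) := by
        congr 1; ext v
        rw [linL, ← integral_const_mul, ← integral_mul_const]
        congr 1; ext p; ring
    _ = ∫ q, (G ∘ MeasurableEquiv.prodAssoc) q ∂collMeasure d := by
        rw [integral_integral hG, ← he.integral_comp hemb]; rfl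
    _ = _ := by rw [hGe, integral_neg]

theorem measurable_collDiff {h : Rd d → ℝ} (hh : Measurable h) :
    Measurable fun q : CollSpace d => collDiff d h q.1.1 q.1.2 q.2 := by
  unfold collDiff
  exact (((hh.comp continuous_vOut.measurable).add (hh.comp continuous_vsOut.measurable)).sub
    (hh.comp measurable_fst.fst)).sub (hh.comp measurable_fst.snd)

theorem integrable_collWeight_mul_mul_collDiff {f g : Rd d → ℝ} (hfm : Measurable f)
    (hgm : Measurable g) (hf : HasPolyGrowth f) (hg : HasPolyGrowth g)
    {x : CollSpace d → Rd d} (hxm : Measurable x)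
    (hx : ∀ q, ‖x q‖ ≤ ‖q.1.1‖ + ‖q.1.2‖) :
    Integrable (fun q => collWeight q * (f (x q) * collDiff d g q.1.1 q.1.2 q.2))
      (collMeasure d) :=
  integrable_collWeight_mul ((hfm.comp hxm).mul (measurable_collDiff hgm)).aestronglyMeasurable
    ((hf.isPolyBounded_comp hx).mul hg.isPolyBounded_collDiff)

theorem integral_collWeight_mul_snd_mul_collDiff (f g : Rd d → ℝ) :
    ∫ q, collWeight q * (f q.1.2 * collDiff d g q.1.1 q.1.2 q.2) ∂collMeasure d
      = ∫ q, collWeight q * (f q.1.1 * collDiff d g q.1.1 q.1.2 q.2) ∂collMeasure d := by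
  rw [← integral_collWeight_mul_comp measurePreserving_particleSwap particleSwap_involutive
    collWeight_particleSwap fun q => f q.1.1 * collDiff d g q.1.1 q.1.2 q.2]
  simp only [particleSwap, collDiff_neg, collDiff_swap]

theorem integral_collWeight_mul_vOut_mul_collDiff (f g : Rd d → ℝ) :
    ∫ q, collWeight q * (f (vOut d q.1.1 q.1.2 q.2) * collDiff d g q.1.1 q.1.2 q.2)
        ∂collMeasure d
      = -∫ q, collWeight q * (f q.1.1 * collDiff d g q.1.1 q.1.2 q.2) ∂collMeasure d := by
  rw [← integral_collWeight_mul_comp measurePreserving_collisionInvolution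
    collisionInvolution_involutive collWeight_collisionInvolution
    fun q => f q.1.1 * collDiff d g q.1.1 q.1.2 q.2]
  simp only [collisionInvolution, collDiff_neg, collDiff_vOut_vsOut, mul_neg, integral_neg,
    neg_neg]

theorem integral_collWeight_mul_vsOut_mul_collDiff (f g : Rd d → ℝ) :
    ∫ q, collWeight q * (f (vsOut d q.1.1 q.1.2 q.2) * collDiff d g q.1.1 q.1.2 q.2)
        ∂collMeasure d
      = ∫ q, collWeight q * (f (vOut d q.1.1 q.1.2 q.2) * collDiff d g q.1.1 q.1.2 q.2)
        ∂collMeasure d := by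
  rw [← integral_collWeight_mul_comp measurePreserving_particleSwap particleSwap_involutive
    collWeight_particleSwap fun q => f (vOut d q.1.1 q.1.2 q.2) * collDiff d g q.1.1 q.1.2 q.2]
  simp only [particleSwap, vOut_swap, vsOut_neg, collDiff_neg, collDiff_swap]

theorem integral_collWeight_mul_collDiff_mul_collDiff {f g : Rd d → ℝ} (hfm : Measurable f)
    (hgm : Measurable g) (hf : HasPolyGrowth f) (hg : HasPolyGrowth g) :
    ∫ q, collWeight q * collDiff d f q.1.1 q.1.2 q.2 * collDiff d g q.1.1 q.1.2 q.2
        ∂collMeasure d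
      = -4 * ∫ q, collWeight q * (f q.1.1 * collDiff d g q.1.1 q.1.2 q.2) ∂collMeasure d := by
  have hint := @integrable_collWeight_mul_mul_collDiff d f g hfm hgm hf hg
  have h₁ := hint measurable_fst.fst fun q => le_add_of_nonneg_right (norm_nonneg q.1.2)
  have h₂ := hint measurable_fst.snd fun q => le_add_of_nonneg_left (norm_nonneg q.1.1)
  have h₃ := hint continuous_vOut.measurable fun q => norm_vOut_le q.1.1 q.1.2 q.2
  have h₄ := hint continuous_vsOut.measurable fun q => norm_vsOut_le q.1.1 q.1.2 q.2
  have hsplit :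
      ∫ q, collWeight q * collDiff d f q.1.1 q.1.2 q.2 * collDiff d g q.1.1 q.1.2 q.2
        ∂collMeasure d
      = (∫ q, collWeight q * (f (vOut d q.1.1 q.1.2 q.2) * collDiff d g q.1.1 q.1.2 q.2)
            ∂collMeasure d
          + ∫ q, collWeight q * (f (vsOut d q.1.1 q.1.2 q.2) * collDiff d g q.1.1 q.1.2 q.2)
            ∂collMeasure d)
        - (∫ q, collWeight q * (f q.1.1 * collDiff d g q.1.1 q.1.2 q.2) ∂collMeasure d
          + ∫ q, collWeight q * (f q.1.2 * collDiff d g q.1.1 q.1.2 q.2) ∂collMeasure d) := by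
    rw [← integral_add h₃ h₄, ← integral_add h₁ h₂,
      ← integral_sub (by exact h₃.add h₄) (by exact h₁.add h₂)]
    congr 1; ext q
    simp only [collDiff]
    ring
  rw [hsplit, integral_collWeight_mul_vsOut_mul_collDiff,
    integral_collWeight_mul_vOut_mul_collDiff, integral_collWeight_mul_snd_mul_collDiff]
  ring

theorem integral_mul_linL_mul_maxw_eq {f g : Rd d → ℝ} (hfm : Measurable f)
    (hgm : Measurable g) (hf : HasPolyGrowth f) (hg : HasPolyGrowth g) :
    ∫ v, f v * linL d g v * Maxw d v = 1 / 4 *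
      ∫ q, collWeight q * collDiff d f q.1.1 q.1.2 q.2 * collDiff d g q.1.1 q.1.2 q.2
        ∂collMeasure d := by
  rw [integral_collWeight_mul_collDiff_mul_collDiff hfm hgm hf hg,
    integral_mul_linL_mul_maxw (integrable_collWeight_mul_mul_collDiff hfm hgm hf hg
      measurable_fst.fst fun q => le_add_of_nonneg_right (norm_nonneg q.1.2))]
  ring

end

theorem linL_dirichlet_form_general (d : ℕ)
    (f g : Rd d → ℝ) (Lf Lg : NNReal)
    (hf : LipschitzWith Lf f) (hg : LipschitzWith Lg g)
    (hfpoly : ∃ C > (0 : ℝ), ∃ k : ℕ, ∀ v, |f v| ≤ C * (1 + ‖v‖) ^ k)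
    (hgpoly : ∃ C > (0 : ℝ), ∃ k : ℕ, ∀ v, |g v| ≤ C * (1 + ‖v‖) ^ k) :
    (∫ v, f v * linL d g v * Maxw d v) =
      (1 / 4) * ∫ p : (Rd d × Rd d) × Sph d,
        Maxw d p.1.1 * Maxw d p.1.2 * max ⟪p.1.1 - p.1.2, (p.2 : Rd d)⟫ 0
          * collDiff d f p.1.1 p.1.2 p.2 * collDiff d g p.1.1 p.1.2 p.2
        ∂(((volume : Measure (Rd d)).prod (volume : Measure (Rd d))).prod
            (sphMeasure d)) ∧
    (∫ v, f v * linL d g v * Maxw d v) = (∫ v, g v * linL d f v * Maxw d v) ∧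
    0 ≤ ∫ v, g v * linL d g v * Maxw d v := by
  have hfm := hf.continuous.measurable
  have hgm := hg.continuous.measurable
  have hfg := integral_mul_linL_mul_maxw_eq hfm hgm hfpoly hgpoly
  refine ⟨hfg, ?_, ?_⟩
  · rw [hfg, integral_mul_linL_mul_maxw_eq hgm hfm hgpoly hfpoly]
    congr 2 with q
    ring
  · rw [integral_mul_linL_mul_maxw_eq hgm hgm hgpoly hgpoly]
    refine mul_nonneg (by norm_num) (integral_nonneg fun q => ?_)
    rw [mul_assoc]
    exact mul_nonneg (collWeight_nonneg q) (mul_self_nonneg _)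

/-- Dirichlet form identity, symmetry and nonnegativity of `ℒ`: for
Lipschitz `f, g` of polynomial growth,
`∫ f ℒg M dv = (1/4) ∫∫∫ M M* ((v-v*)·ω)₊ Δf Δg dv dv* dω`,
hence `∫ f ℒg M = ∫ g ℒf M` and `∫ g ℒg M ≥ 0`. -/
theorem linL_dirichlet_form (d : ℕ) (hd : 1 ≤ d)
    (f g : Rd d → ℝ) (Lf Lg : NNReal)
    (hf : LipschitzWith Lf f) (hg : LipschitzWith Lg g)
    (hfpoly : ∃ C > (0 : ℝ), ∃ k : ℕ, ∀ v, |f v| ≤ C * (1 + ‖v‖) ^ k)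
    (hgpoly : ∃ C > (0 : ℝ), ∃ k : ℕ, ∀ v, |g v| ≤ C * (1 + ‖v‖) ^ k) :
    (∫ v, f v * linL d g v * Maxw d v) =
      (1 / 4) * ∫ p : (Rd d × Rd d) × Sph d,
        Maxw d p.1.1 * Maxw d p.1.2 * max ⟪p.1.1 - p.1.2, (p.2 : Rd d)⟫ 0
          * collDiff d f p.1.1 p.1.2 p.2 * collDiff d g p.1.1 p.1.2 p.2
        ∂(((volume : Measure (Rd d)).prod (volume : Measure (Rd d))).prod
            (sphMeasure d)) ∧
    (∫ v, f v * linL d g v * Maxw d v) = (∫ v, g v * linL d f v * Maxw d v) ∧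
    0 ≤ ∫ v, g v * linL d g v * Maxw d v :=
  linL_dirichlet_form_general d f g Lf Lg hf hg hfpoly hgpoly
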